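/- arXiv:1006.4347 — 7 statements merged into one kernel-verified Lean document; each statement's English description precedes it below -/
import Mathlib

section
/- Let p be an odd prime and let ζ ∈ ℤ_p. For a ∈ ℚ_p, let Φ_a denote the unique ℚ_p-algebra endomorphism of V := ℚ_p[X]/(X^p) sending the class x of X to 1 − Σ_{n=0}^{p−1} C(a,n)(−x)^n (the truncation mod X^p of the binomial series for 1−(1−x)^a); this is well-defined because that element has zero constant term, so its p-th power vanishes in V. Then for all a, b ∈ ℚ_p one has Φ_a ∘ Φ_b = Φ_{a·b} as ℚ_p-algebra endomorphisms of V. (This is the multiplicativity ψ_a ψ_b = ψ_{ab} of Adams operations on the p-adic K-theory of CP^{p−1}, used throughout Section 5.) -/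
open Polynomial

noncomputable def pbinom (p : ℕ) [Fact p.Prime] (y : ℚ_[p]) (n : ℕ) : ℚ_[p] :=
  (descPochhammer ℚ_[p] n).eval y / (n.factorial : ℚ_[p])

noncomputable abbrev TruncV (p : ℕ) [Fact p.Prime] : Type :=
  Polynomial ℚ_[p] ⧸ Ideal.span {(Polynomial.X : Polynomial ℚ_[p]) ^ p}

noncomputable def xV (p : ℕ) [Fact p.Prime] : TruncV p :=
  Ideal.Quotient.mk _ Polynomial.X

noncomputable def phiImg (p : ℕ) [Fact p.Prime] (a : ℚ_[p]) : TruncV p :=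
  1 - ∑ n ∈ Finset.range p, pbinom p a n • (-xV p) ^ n

/-!
Write `u_y(w) = ∑_{n<p} C(y,n) wⁿ` for the truncated binomial series of `(1 + w)^y`. Since
`Φ_a(x) = 1 - u_a(-x)`, the claim `Φ_a(Φ_b(x)) = Φ_{ab}(x)` becomes `u_b(u_a(w) - 1) = u_{ab}(w)`
for `w = -x`, which satisfies `wᵖ = 0`. For natural `a` and `b` this is `((1 + w)^a)^b = (1 + w)^{ab}`,
because the terms of degree `≥ p` of the binomial expansions vanish. Both sides are polynomials in
`a`, and in `b`, with coefficients in `V`; such a polynomial vanishing on `ℕ` vanishes on all of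
`ℚ_p` (its image under any linear functional `V → ℚ_p` does), so the identity extends first to all
`a` and then to all `b`.
-/

section PolynomialMaps

variable (K A : Type*) [Field K] [CommRing A] [Algebra K A]

noncomputable def polynomialMaps : Subalgebra A (K → A) :=
  (aeval fun y : K => algebraMap K A y).range

variable {K A}

lemma const_mem_polynomialMaps (v : A) : (fun _ : K => v) ∈ polynomialMaps K A :=
  (polynomialMaps K A).algebraMap_mem v

lemma algebraMap_comp_eval_mem_polynomialMaps (Q : K[X]) :
    (fun y => algebraMap K A (Q.eval y)) ∈ polynomialMaps K A :=
  ⟨Q.map (algebraMap K A), funext fun y => by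
    simp [aeval_fn_apply, aeval_algebraMap_apply]⟩

lemma Polynomial.eval_algebraMap_eq_zero_of_eval_natCast [CharZero K] (P : A[X])
    (h : ∀ k : ℕ, P.eval (k : A) = 0) (y : K) : P.eval (algebraMap K A y) = 0 := by
  refine (Module.forall_dual_apply_eq_zero_iff K _).mp fun φ => ?_
  set Q : K[X] := ∑ i ∈ Finset.range (P.natDegree + 1), C (φ (P.coeff i)) * X ^ i
  have hQ (z : K) : Q.eval z = φ (P.eval (algebraMap K A z)) := by
    rw [eval_eq_sum_range (p := P), map_sum, eval_finsetSum]
    refine Finset.sum_congr rfl fun i _ => ?_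
    rw [← map_pow, ← Algebra.commutes, ← Algebra.smul_def, map_smul, smul_eq_mul, eval_mul, eval_C, eval_pow, eval_X, mul_comm]
  have hQ0 : Q = 0 := by
    refine Polynomial.eq_zero_of_infinite_isRoot _ <|
      Set.infinite_of_injective_forall_mem Nat.cast_injective fun k : ℕ => ?_
    rw [Set.mem_ofPred_eq, IsRoot.def, hQ, map_natCast, h k, map_zero]
  rw [← hQ, hQ0, eval_zero]

lemma eq_zero_of_mem_polynomialMaps [CharZero K] {f : K → A} (hf : f ∈ polynomialMaps K A)
    (h : ∀ k : ℕ, f k = 0) : f = 0 := by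
  obtain ⟨P, rfl⟩ := hf
  funext y
  simp only [AlgHom.toRingHom_eq_coe, RingHom.coe_coe, aeval_fn_apply] at h ⊢
  exact P.eval_algebraMap_eq_zero_of_eval_natCast (fun k => by simpa using h k) y

lemma eq_of_mem_polynomialMaps [CharZero K] {f g : K → A} (hf : f ∈ polynomialMaps K A)
    (hg : g ∈ polynomialMaps K A) (h : ∀ k : ℕ, f k = g k) : f = g :=
  sub_eq_zero.mp <| eq_zero_of_mem_polynomialMaps (sub_mem hf hg) fun k => sub_eq_zero.mpr (h k)

end PolynomialMaps

section TruncatedBinomialSeries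

variable {K A : Type*} [Field K] [CommRing A] [Algebra K A]

variable (K) in
noncomputable def choosePoly (n : ℕ) : K[X] :=
  C (n.factorial : K)⁻¹ * descPochhammer K n

lemma choosePoly_eval_natCast [CharZero K] (n k : ℕ) :
    (choosePoly K n).eval (k : K) = k.choose n := by
  rw [choosePoly, eval_mul, eval_C, descPochhammer_eval_eq_descFactorial,
    Nat.descFactorial_eq_factorial_mul_choose, Nat.cast_mul,
    inv_mul_cancel_left₀ (Nat.cast_ne_zero.mpr n.factorial_ne_zero)]

noncomputable def truncBinomialSeries (N : ℕ) (w : A) (y : K) : A :=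
  ∑ n ∈ Finset.range N, (choosePoly K n).eval y • w ^ n

lemma map_truncBinomialSeries {B : Type*} [CommRing B] [Algebra K B] (f : A →ₐ[K] B) (N : ℕ)
    (w : A) (y : K) : f (truncBinomialSeries N w y) = truncBinomialSeries N (f w) y := by
  simp only [truncBinomialSeries, map_sum, map_smul, map_pow]

lemma sum_range_choose_mul_pow_of_pow_eq_zero {R : Type*} [CommRing R] {N : ℕ} {w : R}
    (hw : w ^ N = 0) (k : ℕ) : ∑ n ∈ Finset.range N, (k.choose n : R) * w ^ n = (1 + w) ^ k := by
  rw [add_comm, add_pow]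
  calc ∑ n ∈ Finset.range N, (k.choose n : R) * w ^ n
      = ∑ n ∈ Finset.range (max N (k + 1)), (k.choose n : R) * w ^ n :=
        Finset.sum_subset (Finset.range_subset_range.mpr (le_max_left N (k + 1)))
          fun n _ hn => by rw [pow_eq_zero_of_le (by simpa using hn) hw, mul_zero]
    _ = ∑ n ∈ Finset.range (k + 1), (k.choose n : R) * w ^ n :=
        (Finset.sum_subset (Finset.range_subset_range.mpr (le_max_right N (k + 1)))
          fun n _ hn => by rw [Nat.choose_eq_zero_of_lt (by simpa using hn), Nat.cast_zero,
            zero_mul]).symm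
    _ = ∑ n ∈ Finset.range (k + 1), w ^ n * 1 ^ (k - n) * (k.choose n : R) :=
        Finset.sum_congr rfl fun n _ => by rw [one_pow, mul_one, mul_comm]

lemma truncBinomialSeries_natCast [CharZero K] {N : ℕ} {w : A} (hw : w ^ N = 0) (k : ℕ) :
    truncBinomialSeries N w (k : K) = (1 + w) ^ k := by
  simp only [truncBinomialSeries, choosePoly_eval_natCast, Nat.cast_smul_eq_nsmul, nsmul_eq_mul]
  exact sum_range_choose_mul_pow_of_pow_eq_zero hw k

lemma truncBinomialSeries_mem_polynomialMaps (N : ℕ) {f : K → A} (hf : f ∈ polynomialMaps K A)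
    (g : K[X]) : (fun y => truncBinomialSeries N (f y) (g.eval y)) ∈ polynomialMaps K A := by
  simp only [truncBinomialSeries, ← Finset.sum_fn]
  refine Subalgebra.sum_mem _ fun n _ => ?_
  simp only [Algebra.smul_def, ← eval_comp]
  exact Subalgebra.mul_mem _ (algebraMap_comp_eval_mem_polynomialMaps _) (pow_mem hf n)

lemma truncBinomialSeries_truncBinomialSeries_natCast [CharZero K] {N : ℕ} {w : A}
    (hw : w ^ N = 0) (m k : ℕ) :
    truncBinomialSeries N (truncBinomialSeries N w (m : K) - 1) (k : K) =
      truncBinomialSeries N w ((m : K) * k) := by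
  have hw' : ((1 + w) ^ m - 1) ^ N = 0 := by
    obtain ⟨c, hc⟩ := sub_dvd_pow_sub_pow (1 + w) 1 m
    rw [one_pow, add_sub_cancel_left] at hc
    rw [hc, mul_pow, hw, zero_mul]
  rw [truncBinomialSeries_natCast hw, truncBinomialSeries_natCast hw', add_sub_cancel, ← pow_mul,
    ← Nat.cast_mul, truncBinomialSeries_natCast hw]

lemma truncBinomialSeries_mul [CharZero K] {N : ℕ} {w : A} (hw : w ^ N = 0) (a b : K) :
    truncBinomialSeries N (truncBinomialSeries N w a - 1) b = truncBinomialSeries N w (a * b) := by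
  have hseries : (fun y : K => truncBinomialSeries N w y - 1) ∈ polynomialMaps K A := sub_mem
    (by simpa using truncBinomialSeries_mem_polynomialMaps N (const_mem_polynomialMaps w) X)
    (one_mem _)
  have hnatRight (a : K) (k : ℕ) : truncBinomialSeries N (truncBinomialSeries N w a - 1) (k : K) =
      truncBinomialSeries N w (a * k) := by
    refine congrFun (eq_of_mem_polynomialMaps (f := fun y : K => truncBinomialSeries N
      (truncBinomialSeries N w y - 1) (k : K)) (g := fun y : K => truncBinomialSeries N w (y * k))
      ?_ ?_ fun m => truncBinomialSeries_truncBinomialSeries_natCast hw m k) a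
    · simpa using truncBinomialSeries_mem_polynomialMaps N hseries (C (k : K))
    · convert truncBinomialSeries_mem_polynomialMaps N (const_mem_polynomialMaps w)
        (X * C (k : K)) using 3
      simp
  refine congrFun (eq_of_mem_polynomialMaps (f := fun y : K => truncBinomialSeries N
      (truncBinomialSeries N w a - 1) y) (g := fun y : K => truncBinomialSeries N w (a * y))
      ?_ ?_ (hnatRight a)) b
  · simpa using truncBinomialSeries_mem_polynomialMaps N (const_mem_polynomialMaps _) X
  · convert truncBinomialSeries_mem_polynomialMaps N (const_mem_polynomialMaps w) (C a * X)
      using 3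
    simp

end TruncatedBinomialSeries

lemma pbinom_eq_eval_choosePoly (p : ℕ) [Fact p.Prime] (y : ℚ_[p]) (n : ℕ) :
    pbinom p y n = (choosePoly ℚ_[p] n).eval y := by
  rw [pbinom, choosePoly, eval_mul, eval_C, div_eq_inv_mul]

lemma phiImg_eq_one_sub_truncBinomialSeries (p : ℕ) [Fact p.Prime] (a : ℚ_[p]) :
    phiImg p a = 1 - truncBinomialSeries p (-xV p) a := by
  simp only [phiImg, truncBinomialSeries, pbinom_eq_eval_choosePoly]

lemma neg_xV_pow_eq_zero (p : ℕ) [Fact p.Prime] : (-xV p) ^ p = 0 := by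
  have hx : xV p ^ p = 0 := by
    rw [xV, ← map_pow, Ideal.Quotient.eq_zero_iff_mem]
    exact Ideal.subset_span rfl
  rw [neg_pow (xV p), hx, mul_zero]

theorem adams_mul_general (p : ℕ) [Fact p.Prime] (a b : ℚ_[p])
    (Φa Φb Φab : TruncV p →ₐ[ℚ_[p]] TruncV p)
    (ha : Φa (xV p) = phiImg p a) (hb : Φb (xV p) = phiImg p b)
    (hab : Φab (xV p) = phiImg p (a * b)) :
    Φa.comp Φb = Φab := by
  refine AdjoinRoot.algHom_ext (?_ : Φa (Φb (xV p)) = Φab (xV p))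
  rw [hb, hab, phiImg_eq_one_sub_truncBinomialSeries, phiImg_eq_one_sub_truncBinomialSeries,
    map_sub, map_one, map_truncBinomialSeries, map_neg, ha, phiImg_eq_one_sub_truncBinomialSeries,
    neg_sub, truncBinomialSeries_mul (neg_xV_pow_eq_zero p)]

theorem adams_mul (p : ℕ) [Fact p.Prime] (hp : Odd p) (ζ : ℤ_[p]) (a b : ℚ_[p])
    (Φa Φb Φab : TruncV p →ₐ[ℚ_[p]] TruncV p)
    (ha : Φa (xV p) = phiImg p a) (hb : Φb (xV p) = phiImg p b)
    (hab : Φab (xV p) = phiImg p (a * b)) :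
    Φa.comp Φb = Φab :=
  adams_mul_general p a b Φa Φb Φab ha hb hab
end

section
/- Let p be an odd prime and let ζ ∈ ℤ_p be a primitive (p−1)-st root of unity (i.e. ζ^{p−1} = 1 and ζ has multiplicative order p−1). Let Φ_ζ be the ℚ_p-algebra endomorphism of V := ℚ_p[X]/(X^p) sending the class x of X to 1 − Σ_{n=0}^{p−1} C(ζ,n)(−x)^n. Then Φ_ζ^{p−1} = id_V, i.e. the (p−1)-fold composite of Φ_ζ with itself is the identity. -/
open Polynomial

/-! Write `(1 + s) ^ b := ∑_{n < p} C(b, n) s ^ n` for `s ^ p = 0` in a `ℚ_p`-algebra, so that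
`Φ x = 1 - (1 - x) ^ ζ`; for natural `b` this is the binomial expansion. The identity
`((1 + s) ^ a) ^ b = (1 + s) ^ (a * b)` follows from its natural-exponent cases, because both sides
are polynomial in `b` (and, for natural `b`, in `a`) with coefficients in a torsion-free ring, and
such a polynomial is determined by its values on `ℕ`. Hence `Φ ((1 - x) ^ c) = (1 - x) ^ (ζ * c)`,
so `Φ ^ (p - 1)` fixes `1 - x = (1 - x) ^ (ζ ^ (p - 1))`. -/

open Finset

lemma Polynomial.eq_zero_of_forall_eval_natCast_eq_zero {A : Type*} [CommRing A]
    [IsAddTorsionFree A] {P : A[X]} (h : ∀ n : ℕ, P.eval (n : A) = 0) : P = 0 := by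
  -- The `d`-th forward difference of `P` at `0` is `d! • leadingCoeff P`, and only involves
  -- the values `P 0, …, P d`.
  have hΔ := congrFun P.fwdDiff_iter_degree_eq_factorial 0
  simp only [fwdDiff_iter_eq_sum_shift, zero_add, nsmul_eq_mul, mul_one, h, smul_zero,
    sum_const_zero, Pi.smul_apply, Pi.natCast_apply, smul_eq_mul] at hΔ
  rw [← leadingCoeff_eq_zero]
  refine IsAddTorsionFree.nsmul_right_injective P.natDegree.factorial_ne_zero ?_
  simp [nsmul_eq_mul, mul_comm, ← hΔ]

lemma Polynomial.eq_of_forall_eval_natCast_eq {A : Type*} [CommRing A]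
    [IsAddTorsionFree A] {P Q : A[X]} (h : ∀ n : ℕ, P.eval (n : A) = Q.eval (n : A)) : P = Q :=
  sub_eq_zero.mp <| eq_zero_of_forall_eval_natCast_eq_zero fun n => by simp [h]

lemma IsAddTorsionFree.of_module_charZero (K : Type*) [DivisionRing K] [CharZero K]
    (M : Type*) [AddCommGroup M] [Module K M] : IsAddTorsionFree M :=
  letI : Module ℚ M := Module.compHom M (algebraMap ℚ K)
  IsAddTorsionFree.of_module_rat M

section pbinom

variable {p : ℕ} [Fact p.Prime]

lemma pbinom_zero_right (b : ℚ_[p]) : pbinom p b 0 = 1 := by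
  simp [pbinom]

lemma pbinom_natCast (m n : ℕ) : pbinom p m n = m.choose n := by
  have hn : (n.factorial : ℚ_[p]) ≠ 0 := Nat.cast_ne_zero.mpr n.factorial_ne_zero
  rw [pbinom, descPochhammer_eval_eq_descFactorial, Nat.descFactorial_eq_factorial_mul_choose]
  push_cast
  field_simp

end pbinom

section truncBinomial

variable {p : ℕ} [Fact p.Prime] {A B : Type*} [CommRing A] [Algebra ℚ_[p] A]
  [CommRing B] [Algebra ℚ_[p] B]

noncomputable def truncBinomial (s : A) (b : ℚ_[p]) : A :=
  ∑ n ∈ range p, pbinom p b n • s ^ n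

variable (p) in
noncomputable def truncBinomialPoly (s : A) : A[X] :=
  ∑ n ∈ range p,
    (n.factorial : ℚ_[p])⁻¹ • (C (s ^ n) * descPochhammer A n)

lemma eval_truncBinomialPoly (s : A) (b : ℚ_[p]) :
    (truncBinomialPoly p s).eval (algebraMap ℚ_[p] A b) = truncBinomial s b := by
  have h (n : ℕ) : (descPochhammer A n).eval (algebraMap ℚ_[p] A b) =
      algebraMap ℚ_[p] A ((descPochhammer ℚ_[p] n).eval b) := by
    rw [← descPochhammer_map (algebraMap ℚ_[p] A), eval_map_algebraMap, aeval_algebraMap_apply,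
      coe_aeval_eq_eval]
  simp [truncBinomialPoly, truncBinomial, eval_finsetSum, h, pbinom, Algebra.smul_def,
    mul_comm, mul_left_comm, div_eq_inv_mul]

lemma map_truncBinomial (φ : A →ₐ[ℚ_[p]] B) (s : A) (b : ℚ_[p]) :
    φ (truncBinomial s b) = truncBinomial (φ s) b := by
  simp [truncBinomial]

lemma eval_truncBinomialPoly_comp_mul (s : A) (a b : ℚ_[p]) :
    ((truncBinomialPoly p s).comp (C (algebraMap ℚ_[p] A a) * X)).eval (algebraMap ℚ_[p] A b) =
      truncBinomial s (a * b) := by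
  rw [eval_comp, eval_mul, eval_C, eval_X, ← map_mul, eval_truncBinomialPoly]

variable {s : A}

lemma truncBinomial_natCast (hs : s ^ p = 0) (m : ℕ) :
    truncBinomial s (m : ℚ_[p]) = (1 + s) ^ m := by
  rw [truncBinomial, add_comm, add_pow]
  simp only [pbinom_natCast, one_pow, mul_one]
  calc ∑ n ∈ range p, (m.choose n : ℚ_[p]) • s ^ n
      = ∑ n ∈ range (max p (m + 1)), (m.choose n : ℚ_[p]) • s ^ n :=
        sum_subset (range_subset_range.2 (le_max_left _ _)) fun n _ hn => by
          rw [pow_eq_zero_of_le (by simpa using hn) hs, smul_zero]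
    _ = ∑ n ∈ range (m + 1), (m.choose n : ℚ_[p]) • s ^ n :=
        (sum_subset (range_subset_range.2 (le_max_right _ _)) fun n _ hn => by
          rw [Nat.choose_eq_zero_of_lt (by simpa using hn), Nat.cast_zero, zero_smul]).symm
    _ = ∑ n ∈ range (m + 1), s ^ n * (m.choose n : A) :=
        sum_congr rfl fun n _ => by rw [Nat.cast_smul_eq_nsmul, nsmul_eq_mul, mul_comm]

lemma dvd_truncBinomial_sub_one (s : A) (a : ℚ_[p]) : s ∣ truncBinomial s a - 1 := by
  rw [truncBinomial, ← add_sum_erase _ _ (mem_range.2 (Fact.out : p.Prime).pos),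
    pbinom_zero_right, pow_zero, one_smul, add_sub_cancel_left]
  exact dvd_sum fun n hn => by
    rw [Algebra.smul_def]
    exact dvd_mul_of_dvd_right (dvd_pow_self s (ne_of_mem_erase hn)) _

lemma truncBinomial_sub_one_pow (hs : s ^ p = 0) (a : ℚ_[p]) :
    (truncBinomial s a - 1) ^ p = 0 := by
  obtain ⟨g, hg⟩ := dvd_truncBinomial_sub_one s a
  rw [hg, mul_pow, hs, zero_mul]

lemma truncBinomial_natCast_mul (hs : s ^ p = 0) (m : ℕ) (a : ℚ_[p]) :
    truncBinomial s ((m : ℚ_[p]) * a) = truncBinomial s a ^ m := by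
  have := IsAddTorsionFree.of_module_charZero ℚ_[p] A
  have key : (truncBinomialPoly p s).comp (C (algebraMap ℚ_[p] A m) * X) =
      truncBinomialPoly p s ^ m :=
    eq_of_forall_eval_natCast_eq fun n => by
      rw [← map_natCast (algebraMap ℚ_[p] A) n, eval_pow, eval_truncBinomialPoly_comp_mul,
        eval_truncBinomialPoly, ← Nat.cast_mul, truncBinomial_natCast hs,
        truncBinomial_natCast hs, pow_mul']
  simpa only [eval_pow, eval_truncBinomialPoly_comp_mul, eval_truncBinomialPoly] using
    congrArg (eval (algebraMap ℚ_[p] A a)) key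

lemma truncBinomial_truncBinomial_sub_one (hs : s ^ p = 0) (a b : ℚ_[p]) :
    truncBinomial (truncBinomial s a - 1) b = truncBinomial s (a * b) := by
  have := IsAddTorsionFree.of_module_charZero ℚ_[p] A
  have key : truncBinomialPoly p (truncBinomial s a - 1) =
      (truncBinomialPoly p s).comp (C (algebraMap ℚ_[p] A a) * X) :=
    eq_of_forall_eval_natCast_eq fun m => by
      rw [← map_natCast (algebraMap ℚ_[p] A) m, eval_truncBinomialPoly,
        eval_truncBinomialPoly_comp_mul, truncBinomial_natCast (truncBinomial_sub_one_pow hs a),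
        add_sub_cancel, mul_comm, truncBinomial_natCast_mul hs]
  simpa only [eval_truncBinomialPoly_comp_mul, eval_truncBinomialPoly] using
    congrArg (eval (algebraMap ℚ_[p] A b)) key

end truncBinomial

section TruncV

variable {p : ℕ} [Fact p.Prime]

lemma phiImg_eq (a : ℚ_[p]) : phiImg p a = 1 - truncBinomial (-xV p) a := rfl

variable (p) in
lemma xV_pow : xV p ^ p = 0 := by
  rw [xV, ← map_pow, Ideal.Quotient.eq_zero_iff_mem]
  exact Ideal.subset_span rfl

lemma TruncV.algHom_ext {B : Type*} [Semiring B] [Algebra ℚ_[p] B]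
    {f g : TruncV p →ₐ[ℚ_[p]] B} (h : f (xV p) = g (xV p)) : f = g :=
  Ideal.Quotient.algHom_ext _ (Polynomial.algHom_ext h)

end TruncV

theorem adams_pow_orderOf_general (p : ℕ) [Fact p.Prime] (ζ : ℤ_[p])
    (hζ : ζ ^ (p - 1) = 1)
    (Φ : TruncV p →ₐ[ℚ_[p]] TruncV p)
    (hΦ : Φ (xV p) = phiImg p (ζ : ℚ_[p])) :
    (⇑Φ)^[p - 1] = id := by
  have hs : (-xV p) ^ p = 0 := (neg_pow _ _).trans (by rw [xV_pow p, mul_zero])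
  have hsemiconj : Function.Semiconj (truncBinomial (-xV p)) ((ζ : ℚ_[p]) * ·) Φ := fun c => by
    rw [map_truncBinomial, map_neg, hΦ, phiImg_eq, neg_sub,
      truncBinomial_truncBinomial_sub_one hs]
  have hone : truncBinomial (-xV p) (1 : ℚ_[p]) = 1 - xV p := by
    rw [← Nat.cast_one, truncBinomial_natCast hs, pow_one, sub_eq_add_neg]
  have hfix : (Φ ^ (p - 1)) (1 - xV p) = 1 - xV p := by
    rw [← hone, AlgHom.coe_pow, ← (hsemiconj.iterate_right (p - 1)).eq, mul_left_iterate,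
      ← PadicInt.coe_pow, hζ, PadicInt.coe_one]
    simp only [one_mul]
  have hid : Φ ^ (p - 1) = AlgHom.id ℚ_[p] (TruncV p) :=
    TruncV.algHom_ext (by simpa using hfix)
  rw [← AlgHom.coe_pow, hid, AlgHom.coe_id]

theorem adams_pow_orderOf (p : ℕ) [Fact p.Prime] (hp : Odd p) (ζ : ℤ_[p])
    (hζ : ζ ^ (p - 1) = 1) (hord : orderOf ζ = p - 1)
    (Φ : TruncV p →ₐ[ℚ_[p]] TruncV p)
    (hΦ : Φ (xV p) = phiImg p (ζ : ℚ_[p])) :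
    (⇑Φ)^[p - 1] = id :=
  adams_pow_orderOf_general p ζ hζ Φ hΦ
end

section
/- Let p be an odd prime and let ζ ∈ ℤ_p be a primitive (p−1)-st root of unity. Let Φ_ζ be the ℚ_p-algebra endomorphism of V := ℚ_p[X]/(X^p) sending the class x of X to 1 − Σ_{n=0}^{p−1} C(ζ,n)(−x)^n. For 0 ≤ k ≤ p−2 let Λ_k := {g ∈ V : Φ_ζ(g) = ζ^k · g} be the ζ^k-eigenspace. Then V is the internal direct sum V = Λ_0 ⊕ Λ_1 ⊕ ⋯ ⊕ Λ_{p−2}, the eigenspace Λ_0 (eigenvalue 1) has ℚ_p-dimension 2, and each Λ_k for 1 ≤ k ≤ p−2 has ℚ_p-dimension 1. -/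
open Polynomial

open Module

/-! Since `Φ x = ζ x + O(x²)`, the map `Φ - ζ ^ k` sends `x ^ k V` into the strictly smaller
`x ^ (k + 1) V`, so every `ζ ^ k` with `k < p` is an eigenvalue; for `k = p - 1` the image is
`x ^ p V = 0`, so `Λ_0` contains both `1` and `x ^ (p - 1)`. Eigenspaces for the `p - 1` distinct
values `ζ ^ k` are independent, and the lower bounds `2, 1, …, 1` on their dimensions already add
up to `p = dim V`: hence all of them are equalities and the eigenspaces fill `V`. -/

section
variable {K V ι : Type*} [Field K] [AddCommGroup V] [Module K V] [FiniteDimensional K V]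
  [Fintype ι] [DecidableEq ι]

theorem iSupIndep.sum_finrank_le {A : ι → Submodule K V} (hA : iSupIndep A) :
    ∑ i, finrank K (A i) ≤ finrank K V := by
  rw [← finrank_directSum]
  exact LinearMap.finrank_le_finrank_of_injective hA.dfinsupp_lsum_injective

theorem Module.End.isInternal_eigenspace_and_finrank_eq_of_le (f : End K V) {μ : ι → K}
    (hμ : Function.Injective μ) {d : ι → ℕ} (hd : ∀ i, d i ≤ finrank K (f.eigenspace (μ i)))
    (hsum : finrank K V ≤ ∑ i, d i) :
    DirectSum.IsInternal (fun i => f.eigenspace (μ i)) ∧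
      ∀ i, finrank K (f.eigenspace (μ i)) = d i := by
  have hind : iSupIndep fun i => f.eigenspace (μ i) := f.eigenspaces_iSupIndep.comp hμ
  have hsum_eq : ∑ i, d i = ∑ i, finrank K (f.eigenspace (μ i)) :=
    (Finset.sum_le_sum fun i _ => hd i).antisymm (hind.sum_finrank_le.trans hsum)
  refine ⟨⟨hind.dfinsupp_lsum_injective, ?_⟩, fun i =>
    ((Finset.sum_eq_sum_iff_of_le fun i _ => hd i).mp hsum_eq i (Finset.mem_univ i)).symm⟩
  refine (LinearMap.injective_iff_surjective_of_finrank_eq_finrank ?_).mp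
    hind.dfinsupp_lsum_injective
  exact (finrank_directSum K _).trans (by linarith [hind.sum_finrank_le])
end

section
variable {K : Type*} [Field K] {n : ℕ}

local notation "T" => K[X] ⧸ Ideal.span {(X : K[X]) ^ n}
local notation "𝔵" => (Ideal.Quotient.mk (Ideal.span {(X : K[X]) ^ n}) X : T)

instance : Module.Finite K T := (AdjoinRoot.powerBasis' (monic_X_pow (R := K) n)).finite

theorem finrank_truncPoly : finrank K T = n := by
  have := (AdjoinRoot.powerBasis' (monic_X_pow (R := K) n)).finrank
  rwa [AdjoinRoot.powerBasis'_dim, natDegree_X_pow] at this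

theorem truncX_pow_eq_zero_iff {k : ℕ} : 𝔵 ^ k = 0 ↔ n ≤ k := by
  rw [← map_pow, Ideal.Quotient.eq_zero_iff_mem, Ideal.mem_span_singleton,
    pow_dvd_pow_iff X_ne_zero not_isUnit_X]

theorem truncX_dvd_algHom_sub_self (Φ : T →ₐ[K] T) (hΦ : 𝔵 ∣ Φ 𝔵) (a : T) : 𝔵 ∣ Φ a - a := by
  obtain ⟨f, rfl⟩ := Ideal.Quotient.mk_surjective a
  have hf : Ideal.Quotient.mk _ f = aeval 𝔵 f := by
    rw [← Ideal.Quotient.mkₐ_eq_mk K, aeval_algHom_apply, aeval_X_left_apply]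
  rw [hf, ← aeval_algHom_apply, aeval_def, aeval_def, eval₂_eq_eval_map, eval₂_eq_eval_map]
  exact (dvd_sub hΦ dvd_rfl).trans (sub_dvd_eval_sub _ _ _)

theorem truncX_pow_succ_dvd_algHom_sub {Φ : T →ₐ[K] T} {c : K} (hΦ : 𝔵 ^ 2 ∣ Φ 𝔵 - c • 𝔵)
    (k : ℕ) (a : T) : 𝔵 ^ (k + 1) ∣ Φ (𝔵 ^ k * a) - c ^ k • (𝔵 ^ k * a) := by
  obtain ⟨u, hΦx, hu⟩ : ∃ u, Φ 𝔵 = 𝔵 * u ∧ 𝔵 ∣ u - algebraMap K T c := by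
    obtain ⟨b, hb⟩ := hΦ
    refine ⟨algebraMap K T c + 𝔵 * b, ?_, ⟨b, by ring⟩⟩
    rw [sub_eq_iff_eq_add.mp hb, Algebra.smul_def (A := T)]
    ring
  have ha : 𝔵 ∣ Φ a - a := truncX_dvd_algHom_sub_self Φ (hΦx ▸ dvd_mul_right _ _) a
  have hsplit : Φ (𝔵 ^ k * a) - c ^ k • (𝔵 ^ k * a) =
      𝔵 ^ k * ((u ^ k - algebraMap K T c ^ k) * Φ a + algebraMap K T c ^ k * (Φ a - a)) := by
    rw [map_mul, map_pow, hΦx, Algebra.smul_def (A := T), map_pow]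
    ring
  rw [hsplit, pow_succ]
  exact mul_dvd_mul_left _ (dvd_add ((hu.trans (sub_dvd_pow_sub_pow _ _ k)).mul_right _)
    (ha.mul_left _))

theorem truncX_pow_not_dvd {k : ℕ} (hk : k < n) : ¬ 𝔵 ^ (k + 1) ∣ 𝔵 ^ k := by
  rintro ⟨b, hb⟩
  have hunit : IsUnit (1 - 𝔵 * b) :=
    IsNilpotent.isUnit_one_sub ⟨n, by rw [mul_pow, truncX_pow_eq_zero_iff.mpr le_rfl, zero_mul]⟩
  have : 𝔵 ^ k * (1 - 𝔵 * b) = 0 := by linear_combination hb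
  exact absurd (truncX_pow_eq_zero_iff.mp (hunit.mul_left_eq_zero.mp this)) (not_le.mpr hk)

theorem hasEigenvalue_pow_of_sq_dvd {Φ : T →ₐ[K] T} {c : K} (hΦ : 𝔵 ^ 2 ∣ Φ 𝔵 - c • 𝔵)
    {k : ℕ} (hk : k < n) : Module.End.HasEigenvalue Φ.toLinearMap (c ^ k) := by
  let I : ℕ → Submodule K T := fun j => LinearMap.range (LinearMap.mulLeft K (𝔵 ^ j))
  have hI : I (k + 1) < I k := by
    refine lt_of_le_of_ne ?_ fun h => truncX_pow_not_dvd (K := K) hk ?_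
    · rintro _ ⟨b, rfl⟩
      exact ⟨𝔵 * b, by simp only [LinearMap.mulLeft_apply]; ring⟩
    · obtain ⟨b, hb⟩ : 𝔵 ^ k ∈ I (k + 1) := h ▸ ⟨1, mul_one _⟩
      exact ⟨b, hb.symm⟩
  let g := Φ.toLinearMap - c ^ k • LinearMap.id
  have hg : ∀ y ∈ I k, g y ∈ I (k + 1) := by
    rintro _ ⟨a, rfl⟩
    obtain ⟨b, hb⟩ := truncX_pow_succ_dvd_algHom_sub hΦ k a
    exact ⟨b, by simpa [g] using hb.symm⟩
  obtain ⟨⟨v, hv⟩, hker, hv0⟩ :=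
    Submodule.exists_mem_ne_zero_of_ne_bot (LinearMap.ker_ne_bot_of_finrank_lt
      (f := g.restrict hg) (Submodule.finrank_lt_finrank_of_lt hI))
  refine Module.End.hasEigenvalue_of_hasEigenvector (x := v)
    ⟨Module.End.mem_eigenspace_iff.mpr ?_, fun h => hv0 (Subtype.ext h)⟩
  have := congrArg Subtype.val (LinearMap.mem_ker.mp hker)
  simpa [g, sub_eq_zero] using this

theorem truncX_pow_pred_mem_eigenspace_one {Φ : T →ₐ[K] T} {c : K} (hΦ : 𝔵 ^ 2 ∣ Φ 𝔵 - c • 𝔵)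
    (hc : c ^ (n - 1) = 1) (hn : 1 ≤ n) :
    𝔵 ^ (n - 1) ∈ Module.End.eigenspace Φ.toLinearMap 1 := by
  obtain ⟨b, hb⟩ := truncX_pow_succ_dvd_algHom_sub hΦ (n - 1) 1
  rw [Nat.sub_add_cancel hn, truncX_pow_eq_zero_iff.mpr le_rfl, zero_mul, sub_eq_zero, mul_one,
    hc] at hb
  exact Module.End.mem_eigenspace_iff.mpr hb

theorem linearIndependent_one_truncX_pow_pred (hn : 2 ≤ n) :
    LinearIndependent K ![(1 : T), 𝔵 ^ (n - 1)] := by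
  have hsq : 𝔵 ^ (n - 1) * 𝔵 ^ (n - 1) = 0 := by
    rw [← pow_add, truncX_pow_eq_zero_iff]; omega
  have hne : 𝔵 ^ (n - 1) ≠ 0 := by
    rw [Ne, truncX_pow_eq_zero_iff]; omega
  refine LinearIndependent.pair_iff.mpr fun s t hst => ?_
  have hs : s • 𝔵 ^ (n - 1) = 0 := by
    simpa only [mul_add, mul_smul_comm, mul_one, hsq, smul_zero, add_zero, mul_zero] using
      congrArg (𝔵 ^ (n - 1) * ·) hst
  obtain rfl := (smul_eq_zero.mp hs).resolve_right hne
  rw [zero_smul, zero_add] at hst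
  exact ⟨rfl, (smul_eq_zero.mp hst).resolve_right hne⟩

theorem two_le_finrank_eigenspace_one {Φ : T →ₐ[K] T} {c : K} (hΦ : 𝔵 ^ 2 ∣ Φ 𝔵 - c • 𝔵)
    (hc : c ^ (n - 1) = 1) (hn : 2 ≤ n) :
    2 ≤ finrank K (Module.End.eigenspace Φ.toLinearMap 1) := by
  have hspan : Submodule.span K (Set.range ![(1 : T), 𝔵 ^ (n - 1)]) ≤
      Module.End.eigenspace Φ.toLinearMap 1 := by
    rw [Submodule.span_le, Matrix.range_cons, Matrix.range_cons, Matrix.range_empty,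
      Set.union_empty, Set.union_singleton, Set.pair_subset_iff]
    exact ⟨truncX_pow_pred_mem_eigenspace_one hΦ hc (by omega),
      Module.End.mem_eigenspace_iff.mpr (by rw [one_smul]; exact map_one Φ)⟩
  calc 2 = finrank K (Submodule.span K (Set.range ![(1 : T), 𝔵 ^ (n - 1)])) := by
        rw [finrank_span_eq_card (linearIndependent_one_truncX_pow_pred hn), Fintype.card_fin]
    _ ≤ _ := Submodule.finrank_mono hspan

theorem isInternal_eigenspace_pow_of_sq_dvd {Φ : T →ₐ[K] T} {c : K}
    (hΦ : 𝔵 ^ 2 ∣ Φ 𝔵 - c • 𝔵) (hc : orderOf c = n - 1) (hn : 2 ≤ n) :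
    DirectSum.IsInternal (fun k : Fin (n - 1) =>
        Module.End.eigenspace Φ.toLinearMap (c ^ (k : ℕ))) ∧
      finrank K (Module.End.eigenspace Φ.toLinearMap 1) = 2 ∧
      ∀ k : ℕ, 1 ≤ k → k ≤ n - 2 →
        finrank K (Module.End.eigenspace Φ.toLinearMap (c ^ k)) = 1 := by
  have : NeZero (n - 1) := ⟨by omega⟩
  have hinj : Function.Injective fun k : Fin (n - 1) => c ^ (k : ℕ) := fun i j h =>
    Fin.ext (pow_injOn_Iio_orderOf (by rw [Set.mem_Iio, hc]; omega)
      (by rw [Set.mem_Iio, hc]; omega) h)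
  have hle : ∀ k : Fin (n - 1), (if k = 0 then 2 else 1) ≤
      finrank K (Module.End.eigenspace Φ.toLinearMap (c ^ (k : ℕ))) := by
    intro k
    split_ifs with hk
    · rw [hk, Fin.val_zero, pow_zero]
      exact two_le_finrank_eigenspace_one hΦ (hc ▸ pow_orderOf_eq_one c) hn
    · exact Nat.one_le_iff_ne_zero.mpr fun h => Module.End.hasEigenvalue_iff.mp
        (hasEigenvalue_pow_of_sq_dvd hΦ (by omega)) (Submodule.finrank_eq_zero.mp h)
  have hsum : finrank K T ≤ ∑ k : Fin (n - 1), if k = 0 then 2 else 1 := by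
    rw [finrank_truncPoly]
    obtain ⟨m, rfl⟩ : ∃ m, n = m + 2 := ⟨n - 2, by omega⟩
    show m + 2 ≤ ∑ k : Fin (m + 1), if k = 0 then 2 else 1
    simp [Fin.sum_univ_succ, Fin.succ_ne_zero, add_comm]
  obtain ⟨hint, hdim⟩ :=
    Module.End.isInternal_eigenspace_and_finrank_eq_of_le Φ.toLinearMap hinj hle hsum
  refine ⟨hint, ?_, fun k hk1 hk2 => ?_⟩
  · have h0 := hdim 0
    rwa [Fin.val_zero, pow_zero, if_pos rfl] at h0
  · exact (hdim ⟨k, by omega⟩).trans (if_neg (by simp [Fin.ext_iff]; omega))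
end

theorem sq_dvd_phiImg_sub_smul (p : ℕ) [Fact p.Prime] (a : ℚ_[p]) :
    xV p ^ 2 ∣ phiImg p a - a • xV p := by
  obtain ⟨m, hm⟩ : ∃ m, p = m + 2 := ⟨p - 2, by have := (Fact.out : p.Prime).two_le; omega⟩
  have htail : phiImg p a - a • xV p =
      -∑ i ∈ Finset.range m, pbinom p a (i + 2) • (-xV p) ^ (i + 2) := by
    rw [phiImg, show Finset.range p = Finset.range (m + 2) by rw [hm],
      Finset.sum_range_succ', Finset.sum_range_succ']
    simp [pbinom]
  rw [htail]
  refine (Finset.dvd_sum fun i _ => ?_).neg_right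
  rw [Algebra.smul_def (A := TruncV p), pow_add]
  exact dvd_mul_of_dvd_right (dvd_mul_of_dvd_right (pow_dvd_pow_of_dvd ⟨-1, by ring⟩ 2) _) _

theorem eigenspace_direct_sum_general (p : ℕ) [Fact p.Prime] (ζ : ℤ_[p])
    (hord : orderOf ζ = p - 1)
    (Φ : TruncV p →ₐ[ℚ_[p]] TruncV p)
    (hΦ : Φ (xV p) = phiImg p (ζ : ℚ_[p])) :
    DirectSum.IsInternal (fun k : Fin (p - 1) =>
        Module.End.eigenspace (Φ.toLinearMap) ((ζ : ℚ_[p]) ^ (k : ℕ))) ∧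
    Module.finrank ℚ_[p]
      (Module.End.eigenspace (Φ.toLinearMap) ((ζ : ℚ_[p]) ^ (0 : ℕ))) = 2 ∧
    ∀ k : ℕ, 1 ≤ k → k ≤ p - 2 →
      Module.finrank ℚ_[p]
        (Module.End.eigenspace (Φ.toLinearMap) ((ζ : ℚ_[p]) ^ k)) = 1 := by
  have hord' : orderOf (ζ : ℚ_[p]) = p - 1 :=
    hord ▸ orderOf_injective (PadicInt.Coe.ringHom (p := p)).toMonoidHom Subtype.coe_injective ζ
  have hdecomp := isInternal_eigenspace_pow_of_sq_dvd
    (hΦ ▸ sq_dvd_phiImg_sub_smul p (ζ : ℚ_[p])) hord' (Fact.out : p.Prime).two_le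
  rwa [pow_zero]

/-- `V = Λ_0 ⊕ Λ_1 ⊕ ⋯ ⊕ Λ_{p-2}` is the internal direct sum of the eigenspaces of the
Adams operation `ψ_ζ`, with `dim Λ_0 = 2` and `dim Λ_k = 1` for `1 ≤ k ≤ p-2`. -/
theorem eigenspace_direct_sum (p : ℕ) [Fact p.Prime] (hp : Odd p) (ζ : ℤ_[p])
    (hζ : ζ ^ (p - 1) = 1) (hord : orderOf ζ = p - 1)
    (Φ : TruncV p →ₐ[ℚ_[p]] TruncV p)
    (hΦ : Φ (xV p) = phiImg p (ζ : ℚ_[p])) :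
    DirectSum.IsInternal (fun k : Fin (p - 1) =>
        Module.End.eigenspace (Φ.toLinearMap) ((ζ : ℚ_[p]) ^ (k : ℕ))) ∧
    Module.finrank ℚ_[p]
      (Module.End.eigenspace (Φ.toLinearMap) ((ζ : ℚ_[p]) ^ (0 : ℕ))) = 2 ∧
    ∀ k : ℕ, 1 ≤ k → k ≤ p - 2 →
      Module.finrank ℚ_[p]
        (Module.End.eigenspace (Φ.toLinearMap) ((ζ : ℚ_[p]) ^ k)) = 1 :=
  eigenspace_direct_sum_general p ζ hord Φ hΦ
end

section
/- Let p be an odd prime and let ζ ∈ ℤ_p be a primitive (p−1)-st root of unity. Then for all integers k, j with 1 ≤ k ≤ p−2 and 0 ≤ j ≤ k, the sum Σ_{i=0}^{p−2} ζ^{−ik} · C(ζ^i, j) (computed in ℚ_p, where ζ^{−ik} = (ζ^{p−1−k})^i) equals (p−1)/k! if j = k, and equals 0 if j < k. In particular, the lowest-order coefficient of the projection π_k(x) onto the ζ^k-eigenspace appears in degree k and is a p-adic unit multiple of 1/k!. -/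
open Finset Polynomial

theorem sum_range_pow_eq_zero_of_pow_eq_one {R : Type*} [CommRing R] [IsDomain R] {x : R} {n : ℕ}
    (hxn : x ^ n = 1) (hx : x ≠ 1) : ∑ i ∈ range n, x ^ i = 0 := by
  have h : (∑ i ∈ range n, x ^ i) * (x - 1) = 0 := by rw [geom_sum_mul, hxn, sub_self]
  exact (mul_eq_zero.mp h).resolve_right (sub_ne_zero.mpr hx)

namespace IsPrimitiveRoot

variable {R : Type*} [CommRing R] [IsDomain R] {ζ : R} {n : ℕ}

theorem sum_range_pow_pow (hζ : IsPrimitiveRoot ζ n) (s : ℕ) :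
    ∑ i ∈ range n, (ζ ^ s) ^ i = if n ∣ s then (n : R) else 0 := by
  split_ifs with hdvd
  · simp [(hζ.pow_eq_one_iff_dvd s).mpr hdvd]
  · refine sum_range_pow_eq_zero_of_pow_eq_one ?_ (mt (hζ.pow_eq_one_iff_dvd s).mp hdvd)
    rw [← pow_mul, mul_comm, pow_mul, hζ.pow_eq_one, one_pow]

/-- By orthogonality of the characters of `μ_n`, the average keeps exactly the monomials of
degree `≡ k (mod n)`, and the degree bound leaves only `X ^ k`. -/
theorem sum_pow_mul_eval_pow (hζ : IsPrimitiveRoot ζ n) {k : ℕ} (hk : k < n) (f : R[X])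
    (hf : f.natDegree < n + k) :
    ∑ i ∈ range n, (ζ ^ (n - k)) ^ i * f.eval (ζ ^ i) = n * f.coeff k := by
  have hdvd : ∀ m < n + k, n ∣ n - k + m ↔ m = k := by
    intro m hm
    refine ⟨fun h => ?_, ?_⟩
    · have := Nat.eq_of_dvd_of_lt_two_mul (by omega) h (by omega)
      omega
    · rintro rfl
      rw [Nat.sub_add_cancel hk.le]
  calc ∑ i ∈ range n, (ζ ^ (n - k)) ^ i * f.eval (ζ ^ i)
      = ∑ m ∈ range (n + k), f.coeff m * ∑ i ∈ range n, (ζ ^ (n - k + m)) ^ i := by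
        simp_rw [eval_eq_sum_range' hf, mul_sum]
        rw [sum_comm]
        refine sum_congr rfl fun m _ => sum_congr rfl fun i _ => ?_
        rw [pow_add, mul_pow, ← pow_mul, ← pow_mul, ← pow_mul, mul_comm i m]
        ring
    _ = ∑ m ∈ range (n + k), if m = k then n * f.coeff m else 0 := by
        refine sum_congr rfl fun m hm => ?_
        simp only [hζ.sum_range_pow_pow, hdvd m (mem_range.mp hm)]
        split_ifs <;> ring
    _ = n * f.coeff k := by rw [sum_ite_eq' _ k, if_pos (mem_range.mpr (by omega))]

end IsPrimitiveRoot

theorem eigenprojection_lowest_coeff_general (p : ℕ) [Fact p.Prime] (ζ : ℤ_[p])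
    (hord : orderOf ζ = p - 1)
    (k j : ℕ) (hk2 : k ≤ p - 2) :
    (j = k →
      ∑ i ∈ Finset.range (p - 1),
          ((ζ : ℚ_[p]) ^ (p - 1 - k)) ^ i * pbinom p ((ζ : ℚ_[p]) ^ i) j =
        ((p : ℚ_[p]) - 1) / (k.factorial : ℚ_[p])) ∧
    (j < k →
      ∑ i ∈ Finset.range (p - 1),
          ((ζ : ℚ_[p]) ^ (p - 1 - k)) ^ i * pbinom p ((ζ : ℚ_[p]) ^ i) j = 0) := by
  have hp := (Fact.out : p.Prime).two_le
  have hζ : IsPrimitiveRoot (ζ : ℚ_[p]) (p - 1) :=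
    (hord ▸ IsPrimitiveRoot.orderOf ζ).map_of_injective (f := PadicInt.Coe.ringHom)
      Subtype.coe_injective
  have hsum (hj : j ≤ k) : ∑ i ∈ range (p - 1),
      ((ζ : ℚ_[p]) ^ (p - 1 - k)) ^ i * pbinom p ((ζ : ℚ_[p]) ^ i) j =
        ((p : ℚ_[p]) - 1) * (descPochhammer ℚ_[p] j).coeff k / j.factorial := by
    simp_rw [pbinom, ← mul_div_assoc, ← sum_div]
    rw [hζ.sum_pow_mul_eval_pow (by omega) _ (by rw [descPochhammer_natDegree]; omega),
      Nat.cast_sub (by omega), Nat.cast_one]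
  refine ⟨fun hjk => ?_, fun hjk => ?_⟩
  · subst hjk
    have hlead : (descPochhammer ℚ_[p] j).coeff j = 1 := by
      simpa only [descPochhammer_natDegree] using (monic_descPochhammer ℚ_[p] j).coeff_natDegree
    rw [hsum le_rfl, hlead, mul_one]
  · rw [hsum hjk.le, coeff_eq_zero_of_natDegree_lt (by rwa [descPochhammer_natDegree]), mul_zero,
      zero_div]

/-- For `1 ≤ k ≤ p-2` and `0 ≤ j ≤ k`, the sum `Σ_{i=0}^{p-2} ζ^{-ik} C(ζ^i, j)` equals
`(p-1)/k!` if `j = k` and `0` if `j < k`. -/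
theorem eigenprojection_lowest_coeff (p : ℕ) [Fact p.Prime] (hp : Odd p) (ζ : ℤ_[p])
    (hζ : ζ ^ (p - 1) = 1) (hord : orderOf ζ = p - 1)
    (k j : ℕ) (hk1 : 1 ≤ k) (hk2 : k ≤ p - 2) (hj : j ≤ k) :
    (j = k →
      ∑ i ∈ Finset.range (p - 1),
          ((ζ : ℚ_[p]) ^ (p - 1 - k)) ^ i * pbinom p ((ζ : ℚ_[p]) ^ i) j =
        ((p : ℚ_[p]) - 1) / (k.factorial : ℚ_[p])) ∧
    (j < k →
      ∑ i ∈ Finset.range (p - 1),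
          ((ζ : ℚ_[p]) ^ (p - 1 - k)) ^ i * pbinom p ((ζ : ℚ_[p]) ^ i) j = 0) :=
  eigenprojection_lowest_coeff_general p ζ hord k j hk2
end

section
/- Let p be an odd prime and let ζ ∈ ℤ_p be a primitive (p−1)-st root of unity. Then for every y ∈ ℚ_p, the sum of p-adic binomial coefficients Σ_{i=0}^{p−2} C(y·ζ^i, p−1) equals (p−1)·y^{p−1}/(p−1)! in ℚ_p. -/
open Finset Polynomial

namespace IsPrimitiveRoot

variable {R : Type*} [CommRing R] [IsDomain R] {ζ : R} {n : ℕ}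

theorem sum_pow_pow (hζ : IsPrimitiveRoot ζ n) (k : ℕ) :
    ∑ i ∈ range n, (ζ ^ k) ^ i = if n ∣ k then (n : R) else 0 := by
  split_ifs with hk
  · simp [(hζ.pow_eq_one_iff_dvd k).2 hk]
  · have hne : 1 - ζ ^ k ≠ 0 :=
      sub_ne_zero.2 (Ne.symm fun h => hk ((hζ.pow_eq_one_iff_dvd k).1 h))
    refine (mul_eq_zero.1 ?_).resolve_left hne
    rw [mul_neg_geom_sum, ← pow_mul, mul_comm, pow_mul, hζ.pow_eq_one, one_pow, sub_self]

theorem sum_eval_mul_pow (hζ : IsPrimitiveRoot ζ n) {P : R[X]} (hdeg : P.natDegree ≤ n)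
    (hP0 : P.coeff 0 = 0) (y : R) :
    ∑ i ∈ range n, P.eval (y * ζ ^ i) = n * P.coeff n * y ^ n := by
  calc ∑ i ∈ range n, P.eval (y * ζ ^ i)
      = ∑ i ∈ range n, ∑ k ∈ range (n + 1), P.coeff k * y ^ k * (ζ ^ k) ^ i := by
        refine sum_congr rfl fun i _ => ?_
        rw [eval_eq_sum_range' (Nat.lt_succ_of_le hdeg)]
        refine sum_congr rfl fun k _ => ?_
        rw [mul_pow, ← pow_mul, ← pow_mul, mul_comm i k, mul_assoc]
    _ = ∑ k ∈ range (n + 1), P.coeff k * y ^ k * if n ∣ k then (n : R) else 0 := by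
        rw [sum_comm]
        simp only [← mul_sum, hζ.sum_pow_pow]
    _ = n * P.coeff n * y ^ n := by
        rw [sum_eq_single n, if_pos dvd_rfl]
        · ring
        · intro k hk hkn
          split_ifs with hdvd
          · have hk0 : k = 0 := Nat.eq_zero_of_dvd_of_lt hdvd
              (lt_of_le_of_ne (Nat.lt_succ_iff.1 (mem_range.1 hk)) hkn)
            rw [hk0, hP0, zero_mul, zero_mul]
          · rw [mul_zero]
        · exact fun h => absurd (self_mem_range_succ n) h

theorem sum_descPochhammer_eval_mul_pow (hζ : IsPrimitiveRoot ζ n) (y : R) :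
    ∑ i ∈ range n, (descPochhammer R n).eval (y * ζ ^ i) = n * y ^ n := by
  rcases eq_or_ne n 0 with rfl | hn
  · simp
  have hcoeff0 : (descPochhammer R n).coeff 0 = 0 := by
    rw [coeff_zero_eq_eval_zero, descPochhammer_eval_zero, if_neg hn]
  have hmonic : (descPochhammer R n).coeff n = 1 := by
    simpa [Monic, leadingCoeff, descPochhammer_natDegree] using monic_descPochhammer R n
  rw [hζ.sum_eval_mul_pow (descPochhammer_natDegree R n).le hcoeff0, hmonic, mul_one]

end IsPrimitiveRoot

theorem sum_pbinom_roots_top_general (p : ℕ) [Fact p.Prime] (ζ : ℤ_[p])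
    (hord : orderOf ζ = p - 1) (y : ℚ_[p]) :
    ∑ i ∈ Finset.range (p - 1), pbinom p (y * (ζ : ℚ_[p]) ^ i) (p - 1) =
      ((p : ℚ_[p]) - 1) * y ^ (p - 1) / ((p - 1).factorial : ℚ_[p]) := by
  have hζ : IsPrimitiveRoot (ζ : ℚ_[p]) (p - 1) :=
    (hord ▸ IsPrimitiveRoot.orderOf ζ).map_of_injective (f := PadicInt.Coe.ringHom)
      Subtype.coe_injective
  have hcast : ((p - 1 : ℕ) : ℚ_[p]) = (p : ℚ_[p]) - 1 :=
    Nat.cast_pred (Fact.out : p.Prime).pos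
  simp only [pbinom, ← sum_div, hζ.sum_descPochhammer_eval_mul_pow, hcast]

/-- The sum `Σ_{i=0}^{p-2} C(y·ζ^i, p-1)` equals `(p-1)·y^{p-1}/(p-1)!`. -/
theorem sum_pbinom_roots_top (p : ℕ) [Fact p.Prime] (hp : Odd p) (ζ : ℤ_[p])
    (hζ : ζ ^ (p - 1) = 1) (hord : orderOf ζ = p - 1) (y : ℚ_[p]) :
    ∑ i ∈ Finset.range (p - 1), pbinom p (y * (ζ : ℚ_[p]) ^ i) (p - 1) =
      ((p : ℚ_[p]) - 1) * y ^ (p - 1) / ((p - 1).factorial : ℚ_[p]) :=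
  sum_pbinom_roots_top_general p ζ hord y
end

section
/- Let p be an odd prime and let R := (ℤ/p²ℤ)[X]/(X^p), with x the class of X. Let a₁, b, d₀, d₁ ∈ ℤ/p²ℤ, and suppose that d₀ ≡ 1 (mod p) (i.e. d₀ − 1 lies in the ideal pℤ/p²ℤ) and that the equation d₀ + d₁·(1−(1−x)^p)^{p−1} = (1 − p·a₁ + p·b·x^{p−1}) · (d₀ + d₁·x^{p−1})^p holds in R. Then d₀ = 1 − p·a₁ in ℤ/p²ℤ, and d₁ ≡ −b (mod p). (This solves the unit equation ψ_p(u)/u^p = exp(−p(a₁ + b x^{p−1})) modulo (p², x^p) in Section 5.2, showing u = 1 + p·(unit) + (unit)·x^{p−1}.) -/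
open Polynomial

/-- The truncated polynomial ring `(ℤ/p²ℤ)[X]/(X^p)`. -/
abbrev TruncR (p : ℕ) : Type :=
  Polynomial (ZMod (p ^ 2)) ⧸ Ideal.span {(Polynomial.X : Polynomial (ZMod (p ^ 2))) ^ p}

/-- The class of `X` in `(ℤ/p²ℤ)[X]/(X^p)`. -/
noncomputable def xR (p : ℕ) : TruncR p :=
  Ideal.Quotient.mk _ Polynomial.X

/-! In `R` both `p` and `t = x^{p-1}` square to zero. Hence `1 - (1 - x)^p`, which is divisible
by `p` because `x^p = 0`, has vanishing `(p-1)`-st power once `p ≥ 3`, so the left side is `d₀`.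
Writing `d₀ = 1 + p c`, the binomial theorem gives `(d₀ + d₁ t)^p = 1 + p d₁ t`, so the right side
is `(1 - p a₁) + p (b + d₁) t`. Comparing the coefficients of `1` and `x^{p-1}` gives
`d₀ = 1 - p a₁` and `p (d₁ + b) = 0`, i.e. `d₁ ≡ -b (mod p)`. -/

section SquareZero

variable {R : Type*} [CommRing R]

theorem add_pow_succ_of_sq_eq_zero {t : R} (ht : t ^ 2 = 0) (a : R) (n : ℕ) :
    (a + t) ^ (n + 1) = a ^ (n + 1) + (n + 1) * a ^ n * t := by
  induction n with
  | zero => simp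
  | succ n ih =>
    rw [pow_succ, ih]
    push_cast
    linear_combination (↑n + 1) * a ^ n * ht

theorem add_pow_of_sq_eq_zero {t : R} (ht : t ^ 2 = 0) (a : R) :
    ∀ n : ℕ, (a + t) ^ n = a ^ n + n * a ^ (n - 1) * t
  | 0 => by simp
  | m + 1 => by simpa using add_pow_succ_of_sq_eq_zero ht a m

theorem one_add_natCast_mul_add_pow_self {p : ℕ} (hp : (p : R) ^ 2 = 0) (c : R) {t : R}
    (ht : t ^ 2 = 0) : (1 + p * c + t) ^ p = 1 + p * t := by
  have hpc : ((p : R) * c) ^ 2 = 0 := by rw [mul_pow, hp, zero_mul]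
  rw [add_pow_of_sq_eq_zero ht, add_pow_of_sq_eq_zero hpc, add_pow_of_sq_eq_zero hpc]
  linear_combination (c + ((p - 1 : ℕ) : R) * c * t) * hp

theorem one_sub_one_sub_pow_pow_eq_zero {p : ℕ} (hp : p.Prime) (hpR : (p : R) ^ 2 = 0) {x : R}
    (hx : x ^ p = 0) {n : ℕ} (hn : 2 ≤ n) : (1 - (1 - x) ^ p) ^ n = 0 := by
  obtain ⟨r, hr⟩ := exists_add_pow_prime_eq hp 1 (-x)
  have hxp : (-x) ^ p = 0 := by rw [neg_pow, hx, mul_zero]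
  rw [← sub_eq_add_neg, hxp, one_pow] at hr
  obtain ⟨m, rfl⟩ := Nat.exists_eq_add_of_le hn
  rw [hr, show 1 - (1 + 0 + p * 1 * -x * r) = (p : R) * (x * r) by ring, mul_pow, pow_add, hpR,
    zero_mul, zero_mul]

end SquareZero

theorem ZMod.mem_span_natCast_of_natCast_mul_eq_zero {p : ℕ} (hp : p ≠ 0) {y : ZMod (p ^ 2)}
    (h : (p : ZMod (p ^ 2)) * y = 0) : y ∈ Ideal.span {(p : ZMod (p ^ 2))} := by
  obtain ⟨m, rfl⟩ := ZMod.intCast_surjective y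
  have hdvd : (p : ℤ) * p ∣ p * m := by
    have h' : ((p * m : ℤ) : ZMod (p ^ 2)) = 0 := by push_cast; exact h
    rw [ZMod.intCast_zmod_eq_zero_iff_dvd] at h'
    simpa [sq] using h'
  rw [Ideal.mem_span_singleton]
  simpa using map_dvd (Int.castRingHom (ZMod (p ^ 2)))
    (Int.dvd_of_mul_dvd_mul_left (by exact_mod_cast hp) hdvd)

theorem algebraMap_add_mul_mk_X_pow_inj {A : Type*} [CommRing A] {n k : ℕ} (hk0 : k ≠ 0)
    (hkn : k < n) {a b a' b' : A}
    (h : algebraMap A (A[X] ⧸ Ideal.span {(X : A[X]) ^ n}) a +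
        algebraMap A _ b * Ideal.Quotient.mk _ X ^ k =
      algebraMap A _ a' + algebraMap A _ b' * Ideal.Quotient.mk _ X ^ k) :
    a = a' ∧ b = b' := by
  have hdvd : X ^ n ∣ C a + C b * X ^ k - (C a' + C b' * X ^ k) := by
    rw [← Ideal.mem_span_singleton, ← Ideal.Quotient.eq_zero_iff_mem, map_sub, sub_eq_zero]
    exact h
  rw [X_pow_dvd_iff] at hdvd
  have h0 := hdvd 0 (by omega)
  have hk := hdvd k hkn
  simp [coeff_C, coeff_X_pow, hk0, Ne.symm hk0] at h0 hk
  exact ⟨sub_eq_zero.mp h0, sub_eq_zero.mp hk⟩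

/-- Solving the unit equation `ψ_p(u)/u^p = exp(-p(a₁ + b x^{p-1}))` modulo `(p², x^p)`:
if `d₀ ≡ 1 (mod p)` and
`d₀ + d₁ (1-(1-x)^p)^{p-1} = (1 - p a₁ + p b x^{p-1}) (d₀ + d₁ x^{p-1})^p` in `R`,
then `d₀ = 1 - p a₁` and `d₁ ≡ -b (mod p)`. -/
theorem unit_equation_solution (p : ℕ) (hp : p.Prime) (hodd : Odd p)
    (a₁ b d₀ d₁ : ZMod (p ^ 2))
    (hd₀ : d₀ - 1 ∈ Ideal.span {(p : ZMod (p ^ 2))})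
    (heq : algebraMap (ZMod (p ^ 2)) (TruncR p) d₀ +
        algebraMap (ZMod (p ^ 2)) (TruncR p) d₁ * (1 - (1 - xR p) ^ p) ^ (p - 1) =
      (algebraMap (ZMod (p ^ 2)) (TruncR p) (1 - (p : ZMod (p ^ 2)) * a₁) +
          algebraMap (ZMod (p ^ 2)) (TruncR p) ((p : ZMod (p ^ 2)) * b) * xR p ^ (p - 1)) *
        (algebraMap (ZMod (p ^ 2)) (TruncR p) d₀ +
            algebraMap (ZMod (p ^ 2)) (TruncR p) d₁ * xR p ^ (p - 1)) ^ p) :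
    d₀ = 1 - (p : ZMod (p ^ 2)) * a₁ ∧ d₁ + b ∈ Ideal.span {(p : ZMod (p ^ 2))} := by
  set φ := algebraMap (ZMod (p ^ 2)) (TruncR p)
  have hp3 : 3 ≤ p := by
    obtain ⟨k, rfl⟩ := hodd
    have := hp.two_le
    omega
  have hpZ : (p : ZMod (p ^ 2)) ^ 2 = 0 := by exact_mod_cast ZMod.natCast_self (p ^ 2)
  have hpR : (p : TruncR p) ^ 2 = 0 := by rw [← map_natCast φ, ← map_pow, hpZ, map_zero]
  have hx : xR p ^ p = 0 := by
    rw [xR, ← map_pow, Ideal.Quotient.eq_zero_iff_mem]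
    exact Ideal.subset_span rfl
  set t := xR p ^ (p - 1)
  have ht : t ^ 2 = 0 := by rw [← pow_mul, pow_eq_zero_of_le (by omega) hx]
  obtain ⟨c, hc⟩ := Ideal.mem_span_singleton'.mp hd₀
  have hpow : (φ d₀ + φ d₁ * t) ^ p = 1 + p * (φ d₁ * t) := by
    rw [show d₀ = 1 + p * c by linear_combination -hc, map_add, map_one, map_mul, map_natCast]
    exact one_add_natCast_mul_add_pow_self hpR _ (by rw [mul_pow, ht, mul_zero])
  rw [one_sub_one_sub_pow_pow_eq_zero hp hpR hx (by omega), hpow] at heq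
  obtain ⟨hd₀, hd₁b⟩ := algebraMap_add_mul_mk_X_pow_inj (n := p) (k := p - 1) (by omega) (by omega)
    (a := d₀) (b := 0) (a' := 1 - p * a₁) (b' := p * (d₁ + b)) (by
      change φ d₀ + φ 0 * t = φ (1 - p * a₁) + φ (p * (d₁ + b)) * t
      simp only [map_zero, map_sub, map_mul, map_add, map_one, map_natCast] at heq ⊢
      linear_combination heq + (φ b * φ d₁ * t ^ 2 - φ a₁ * φ d₁ * t) * hpR)
  exact ⟨hd₀, ZMod.mem_span_natCast_of_natCast_mul_eq_zero hp.ne_zero hd₁b.symm⟩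
end

section
/- Let p be a prime and k ≥ 1 an integer. Let M := ⊕_{i∈ℕ} ℤ_p be the free ℤ_p-module on basis (e_i)_{i∈ℕ} (finitely supported functions ℕ → ℤ_p), and let T : M → M be the ℤ_p-linear map defined on the basis by T(e_i) = p·e_i + e_{i−k} if i ≥ k, and T(e_i) = p·e_i if i < k. Then T is injective, and the quotient module M / T(M) is isomorphic as a ℤ_p-module to (ℚ_p/ℤ_p)^k, the direct sum of k copies of the Prüfer module ℚ_p/ℤ_p (the quotient of ℚ_p by the image of ℤ_p). (This computes the even homotopy groups π_{2*} THH^{K_p^∧}(K/p) ≅ (ℤ/p^∞)^k as the cokernel of u−1 = p + x^k acting on K_p^∧-homology of CP^∞, and the vanishing of odd homotopy groups via injectivity.) -/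
/-!
Write `T = p + D`, where `D` is the shift `e_i ↦ e_{i-k}` (zero for `i < k`). At the top index `n`
of the support of `x` one has `(T x)_n = p x_n`, so `T` is injective.

For the cokernel, `e_{r + J k} ↦ (-p)^{-(J+1)} e_r` (`r < k`) defines a map `M → ℚ_p^k` sending
`T(M)` into `ℤ_p^k`, hence `M / T(M) → (ℚ_p/ℤ_p)^k`; it is onto since the `(-p)^{-(J+1)} ℤ_p`
exhaust `ℚ_p`. In `M / T(M)` we have `e_i = -p e_{i+k}` and `p e_r = 0` for `r < k`, so every class
is a combination of the `e_{r + J k}`, `r < k`, for a single large `J`, and these are killed by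
`p^{J+1}`; on such a combination the map is visibly injective.
-/

/-- `ℤ_p` embedded in `ℚ_p` as a `ℤ_p`-submodule. -/
noncomputable def padicIntSubmodule (p : ℕ) [Fact p.Prime] : Submodule ℤ_[p] ℚ_[p] :=
  LinearMap.range (Algebra.linearMap ℤ_[p] ℚ_[p])

open Finsupp

section ShiftDown

variable {R : Type*} [CommSemiring R]

noncomputable def shiftDown (k : ℕ) : (ℕ →₀ R) →ₗ[R] ℕ →₀ R :=
  lcomapDomain (· + k) (add_left_injective k)

@[simp]
lemma shiftDown_apply (k : ℕ) (x : ℕ →₀ R) (n : ℕ) : shiftDown k x n = x (n + k) := rfl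

lemma shiftDown_single (k i : ℕ) (c : R) :
    shiftDown k (single i c) = if k ≤ i then single (i - k) c else 0 := by
  ext n
  split_ifs <;> simp only [shiftDown_apply, single_apply, coe_zero, Pi.zero_apply] <;> grind

lemma eq_smul_add_shiftDown {a : R} {k : ℕ} {T : (ℕ →₀ R) →ₗ[R] ℕ →₀ R}
    (hT : ∀ i, T (single i 1) = a • single i 1 + if k ≤ i then single (i - k) 1 else 0) :
    T = a • LinearMap.id + shiftDown k := by
  ext i : 2
  simp [hT, shiftDown_single]

end ShiftDown

lemma injective_smul_add_shiftDown {R : Type*} [CommRing R] [NoZeroDivisors R] {a : R}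
    (ha : a ≠ 0) {k : ℕ} (hk : 0 < k) :
    Function.Injective (a • LinearMap.id + shiftDown k : (ℕ →₀ R) →ₗ[R] ℕ →₀ R) := by
  refine (injective_iff_map_eq_zero _).2 fun x hx => ?_
  by_contra hx0
  have hne := support_nonempty_iff.2 hx0
  set n := x.support.max' hne
  have htop : x (n + k) = 0 :=
    notMem_support_iff.1 fun h => by have := x.support.le_max' _ h; omega
  have : a * x n = 0 := by simpa [htop] using DFunLike.congr_fun hx n
  exact mem_support_iff.1 (x.support.max'_mem hne) ((mul_eq_zero.1 this).resolve_left ha)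

section Cokernel

variable {R : Type*} [CommRing R] (a : R) (k : ℕ)

local notation "A" => (a • LinearMap.id + shiftDown k : (ℕ →₀ R) →ₗ[R] ℕ →₀ R)

local notation "π" => Submodule.mkQ (LinearMap.range A)

lemma mkQ_single_eq_neg_smul (i : ℕ) :
    π (single i 1) = -a • π (single (i + k) 1) := by
  have hA : A (single (i + k) 1) = a • single (i + k) 1 + single i 1 := by
    simp [shiftDown_single]
  rw [neg_smul, eq_neg_iff_add_eq_zero, ← map_smul, ← map_add, Submodule.mkQ_apply,
    Submodule.Quotient.mk_eq_zero]
  exact ⟨single (i + k) 1, by rw [hA, add_comm]⟩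

lemma pow_smul_mkQ_single_eq_zero {r : ℕ} (hr : r < k) (J : ℕ) :
    a ^ (J + 1) • π (single (r + J * k) 1) = 0 := by
  induction J with
  | zero =>
    have hA : A (single r 1) = a • single r 1 := by simp [shiftDown_single, hr.not_ge]
    rw [zero_add, pow_one, zero_mul, add_zero, ← map_smul, ← hA]
    exact (Submodule.Quotient.mk_eq_zero _).2 (LinearMap.mem_range_self _ _)
  | succ J ih =>
    rw [mkQ_single_eq_neg_smul a k, neg_smul, smul_neg, smul_smul, ← pow_succ, neg_eq_zero] at ih
    rwa [add_mul, one_mul, ← add_assoc]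

noncomputable def cokernelLayer (J : ℕ) : Submodule R ((ℕ →₀ R) ⧸ LinearMap.range A) :=
  Submodule.span R (Set.range fun r : Fin k => π (single (r + J * k) 1))

lemma cokernelLayer_mono : Monotone (cokernelLayer a k) := by
  refine monotone_nat_of_le_succ fun J => Submodule.span_le.2 ?_
  rintro _ ⟨r, rfl⟩
  dsimp only
  rw [mkQ_single_eq_neg_smul a k, add_assoc, ← Nat.succ_mul]
  exact Submodule.smul_mem _ _ (Submodule.subset_span ⟨r, rfl⟩)

lemma exists_mkQ_mem_cokernelLayer [NeZero k] (x : ℕ →₀ R) : ∃ J, π x ∈ cokernelLayer a k J := by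
  induction x using Finsupp.induction_linear with
  | zero => exact ⟨0, by simp⟩
  | add x y hx hy =>
    obtain ⟨J₁, h₁⟩ := hx
    obtain ⟨J₂, h₂⟩ := hy
    refine ⟨max J₁ J₂, ?_⟩
    rw [map_add]
    exact add_mem (cokernelLayer_mono a k (le_max_left _ _) h₁)
      (cokernelLayer_mono a k (le_max_right _ _) h₂)
  | single i c =>
    refine ⟨i / k, ?_⟩
    rw [← smul_single_one, map_smul]
    refine Submodule.smul_mem _ _ (Submodule.subset_span ⟨Fin.ofNat k i, ?_⟩)
    dsimp only
    rw [Fin.val_ofNat, Nat.mod_add_div']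

end Cokernel

section Padic

variable (p : ℕ) [Fact p.Prime]

lemma pow_dvd_of_smul_inv_neg_pow_mem {c : ℤ_[p]} {n : ℕ}
    (h : c • ((-p : ℚ_[p]) ^ n)⁻¹ ∈ padicIntSubmodule p) : (p : ℤ_[p]) ^ n ∣ c := by
  obtain ⟨d, hd⟩ := h
  have hp0 : (-p : ℚ_[p]) ^ n ≠ 0 := pow_ne_zero _ (neg_ne_zero.2 (NeZero.ne _))
  refine ⟨(-1) ^ n * d, Subtype.coe_injective ?_⟩
  simp only [Algebra.linearMap_apply, Algebra.smul_def, PadicInt.algebraMap_apply] at hd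
  push_cast
  rw [hd, ← mul_assoc, ← mul_pow, mul_neg_one, mul_comm (c : ℚ_[p]),
    mul_inv_cancel_left₀ hp0]

lemma exists_smul_inv_neg_pow_eq (z : ℚ_[p]) :
    ∃ (n : ℕ) (c : ℤ_[p]), c • ((-p : ℚ_[p]) ^ (n + 1))⁻¹ = z := by
  have hp1 : (1 : ℝ) < p := by exact_mod_cast (Fact.out : p.Prime).one_lt
  obtain ⟨n, hn⟩ := pow_unbounded_of_one_lt ‖z‖ hp1
  have hp0 : (-p : ℚ_[p]) ^ (n + 1) ≠ 0 := pow_ne_zero _ (neg_ne_zero.2 (NeZero.ne _))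
  have hc : ‖(-p : ℚ_[p]) ^ (n + 1) * z‖ ≤ 1 := by
    rw [norm_mul, norm_pow, norm_neg, Padic.norm_p, inv_pow, inv_mul_le_iff₀ (by positivity),
      mul_one]
    exact hn.le.trans (pow_le_pow_right₀ hp1.le n.le_succ)
  exact ⟨n, ⟨_, hc⟩,
    (Algebra.smul_def _ _).trans ((mul_comm _ _).trans (inv_mul_cancel_left₀ hp0 z))⟩

variable (k : ℕ) [NeZero k]

noncomputable def toPrufer : (ℕ →₀ ℤ_[p]) →ₗ[ℤ_[p]] Fin k → ℚ_[p] ⧸ padicIntSubmodule p :=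
  linearCombination ℤ_[p] fun i =>
    Pi.single (Fin.ofNat k i) (Submodule.Quotient.mk ((-p : ℚ_[p]) ^ (i / k + 1))⁻¹)

lemma toPrufer_single_add_mul (r : Fin k) (J : ℕ) (c : ℤ_[p]) :
    toPrufer p k (single (r + J * k) c) =
      Pi.single r (Submodule.Quotient.mk (c • ((-p : ℚ_[p]) ^ (J + 1))⁻¹)) := by
  have hr : Fin.ofNat k (r + J * k) = r := by
    ext; rw [Fin.val_ofNat, Nat.add_mul_mod_self_right, Nat.mod_eq_of_lt r.isLt]
  have hJ : (r + J * k) / k = J := by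
    rw [Nat.add_mul_div_right _ _ (NeZero.pos k), Nat.div_eq_of_lt r.isLt, zero_add]
  rw [toPrufer, linearCombination_single, hr, hJ, ← Pi.single_smul', Submodule.Quotient.mk_smul]

lemma toPrufer_comp_smul_add_shiftDown :
    toPrufer p k ∘ₗ ((p : ℤ_[p]) • LinearMap.id + shiftDown k) = 0 := by
  refine lhom_ext' fun i => LinearMap.ext_ring ?_
  obtain ⟨r, J, rfl⟩ : ∃ (r : Fin k) (J : ℕ), i = r + J * k :=
    ⟨Fin.ofNat k i, i / k, by rw [Fin.val_ofNat, Nat.mod_add_div']⟩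
  have hsmul (n : ℕ) : (p : ℤ_[p]) • ((-p : ℚ_[p]) ^ (n + 1))⁻¹ = -((-p : ℚ_[p]) ^ n)⁻¹ := by
    rw [Algebra.smul_def, PadicInt.algebraMap_apply, PadicInt.coe_natCast, pow_succ, mul_inv,
      inv_neg, mul_neg, mul_neg, mul_left_comm, mul_inv_cancel₀ (NeZero.ne _), mul_one]
  simp only [LinearMap.comp_apply, lsingle_apply, LinearMap.add_apply, LinearMap.smul_apply,
    LinearMap.id_apply, smul_single_one, LinearMap.zero_apply, shiftDown_single]
  rcases J with _ | J
  · rw [if_neg (by omega), add_zero, toPrufer_single_add_mul, hsmul, pow_zero, inv_one,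
      Pi.single_eq_zero_iff, Submodule.Quotient.mk_eq_zero]
    exact ⟨-1, by simp⟩
  · have hsub : r + (J + 1) * k - k = r + J * k := by rw [add_mul, one_mul]; omega
    rw [if_pos (by rw [add_mul, one_mul]; omega), hsub, map_add, toPrufer_single_add_mul,
      toPrufer_single_add_mul, hsmul, one_smul, ← Pi.single_add, ← Submodule.Quotient.mk_add,
      neg_add_cancel, Submodule.Quotient.mk_zero, Pi.single_zero]

local notation "A" =>
  ((p : ℤ_[p]) • LinearMap.id + shiftDown k : (ℕ →₀ ℤ_[p]) →ₗ[ℤ_[p]] ℕ →₀ ℤ_[p])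

lemma range_le_ker_toPrufer : LinearMap.range A ≤ LinearMap.ker (toPrufer p k) :=
  LinearMap.range_le_ker_iff.2 (toPrufer_comp_smul_add_shiftDown p k)

lemma injective_liftQ_toPrufer :
    Function.Injective ((LinearMap.range A).liftQ (toPrufer p k) (range_le_ker_toPrufer p k)) := by
  refine (injective_iff_map_eq_zero _).2 fun q hq => ?_
  obtain ⟨x, rfl⟩ := Submodule.mkQ_surjective _ q
  obtain ⟨J, hJ⟩ := exists_mkQ_mem_cokernelLayer (p : ℤ_[p]) k x
  obtain ⟨c, hc⟩ := (Submodule.mem_span_range_iff_exists_fun _).1 hJ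
  rw [← hc] at hq ⊢
  simp only [map_sum, map_smul, Submodule.mkQ_apply, Submodule.liftQ_apply] at hq
  simp only [toPrufer_single_add_mul, one_smul, ← Pi.single_smul', ← Submodule.Quotient.mk_smul,
    Finset.univ_sum_single] at hq
  refine Finset.sum_eq_zero fun r _ => ?_
  obtain ⟨d, hd⟩ :=
    pow_dvd_of_smul_inv_neg_pow_mem p ((Submodule.Quotient.mk_eq_zero _).1 (congr_fun hq r))
  rw [hd, mul_comm, mul_smul, pow_smul_mkQ_single_eq_zero _ _ r.isLt, smul_zero]

lemma surjective_toPrufer : Function.Surjective (toPrufer p k) := by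
  rw [← LinearMap.range_eq_top, eq_top_iff, ← LinearMap.iSup_range_single, iSup_le_iff]
  rintro r _ ⟨q, rfl⟩
  obtain ⟨z, rfl⟩ := Submodule.mkQ_surjective _ q
  obtain ⟨J, c, rfl⟩ := exists_smul_inv_neg_pow_eq p z
  exact ⟨single (r + J * k) c, toPrufer_single_add_mul p k r J c⟩

noncomputable def cokernelEquivPrufer :
    ((ℕ →₀ ℤ_[p]) ⧸ LinearMap.range A) ≃ₗ[ℤ_[p]] Fin k → ℚ_[p] ⧸ padicIntSubmodule p :=
  LinearEquiv.ofBijective _ ⟨injective_liftQ_toPrufer p k, by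
    rw [← LinearMap.range_eq_top, Submodule.range_liftQ, LinearMap.range_eq_top]
    exact surjective_toPrufer p k⟩

end Padic

/-- If `T` is the `ℤ_p`-linear endomorphism of `M = ⊕_{i∈ℕ} ℤ_p` with
`T(e_i) = p·e_i + e_{i-k}` for `i ≥ k` and `T(e_i) = p·e_i` for `i < k`, then `T` is
injective and `M / T(M) ≅ (ℚ_p/ℤ_p)^k` as `ℤ_p`-modules. -/
theorem cokernel_of_p_plus_shift (p k : ℕ) [Fact p.Prime] (hk : 1 ≤ k)
    (T : (ℕ →₀ ℤ_[p]) →ₗ[ℤ_[p]] (ℕ →₀ ℤ_[p]))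
    (hT : ∀ i : ℕ, T (Finsupp.single i 1) =
      (p : ℤ_[p]) • Finsupp.single i 1 +
        (if k ≤ i then Finsupp.single (i - k) (1 : ℤ_[p]) else 0)) :
    Function.Injective T ∧
    Nonempty (((ℕ →₀ ℤ_[p]) ⧸ LinearMap.range T) ≃ₗ[ℤ_[p]]
      (Fin k → ℚ_[p] ⧸ padicIntSubmodule p)) := by
  have : NeZero k := ⟨by omega⟩
  obtain rfl := eq_smul_add_shiftDown hT
  exact ⟨injective_smul_add_shiftDown (NeZero.ne _) hk, ⟨cokernelEquivPrufer p k⟩⟩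
end
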